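/- (Lemma 2.) Let θ_t, φ_t, ψ, θ_r, φ_r, λ, L1, L2 be reals with λ, L1, L2 > 0, and set k = 2π/λ. Define in ℝ³: a_t = (−sin θ_t cos φ_t, −sin θ_t sin φ_t, −cos θ_t), a_r = (sin θ_r cos φ_r, sin θ_r sin φ_r, cos θ_r), a_H = (−sin ψ cos θ_t cos φ_t − cos ψ sin φ_t, −sin ψ cos θ_t sin φ_t + cos ψ cos φ_t, sin ψ sin θ_t), and let e_x = (1,0,0), e_y = (0,1,0), e_z = (0,0,1). Then (4π L1² L2²/λ²) · ‖(e_z × a_H) × a_r‖² · sinc²((kL1/2)·⟨a_r − a_t, e_x⟩) · sinc²((kL2/2)·⟨a_r − a_t, e_y⟩) = (4π L1² L2²/λ²) · [cos²θ_r·(sin ψ cos θ_t sin(φ_r − φ_t) + cos ψ cos(φ_t − φ_r))² + (cos ψ sin(φ_t − φ_r) + sin ψ cos θ_t cos(φ_t − φ_r))²] · sinc²((kL1/2)(sin θ_r cos φ_r + sin θ_t cos φ_t)) · sinc²((kL2/2)(sin θ_r sin φ_r + sin θ_t sin φ_t)). -/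

import Mathlib

open scoped RealInnerProductSpace
open Real

/-- The unnormalized sinc function: `sinc x = sin x / x` for `x ≠ 0`, and `sinc 0 = 1`. -/
noncomputable def sinc (x : ℝ) : ℝ := if x = 0 then 1 else Real.sin x / x

/-- Construct a vector of `EuclideanSpace ℝ (Fin 3)` from its three coordinates. -/
noncomputable def vec3 (x y z : ℝ) : EuclideanSpace ℝ (Fin 3) := WithLp.toLp 2 ![x, y, z]

/-- The cross product on `EuclideanSpace ℝ (Fin 3)`. -/
noncomputable def cross3 (v w : EuclideanSpace ℝ (Fin 3)) : EuclideanSpace ℝ (Fin 3) :=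
  vec3 (v 1 * w 2 - v 2 * w 1) (v 2 * w 0 - v 0 * w 2) (v 0 * w 1 - v 1 * w 0)

/-!
Since `a_r` is a unit vector, Lagrange's identity gives
`‖(e_z × a_H) × a_r‖² = ‖e_z × a_H‖² - ⟪e_z × a_H, a_r⟫²`. The vector `e_z × a_H` is horizontal;
in the horizontal frame rotated by `φ_r` its components are `-A` and `-B`, where `A` and `B` are
the two brackets of the right-hand side, so the expression equals
`A² + B² - sin² θ_r · A² = cos² θ_r · A² + B²`. The sinc arguments are just the `x`- and
`y`-coordinates of `a_r - a_t`.
-/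

section vec3

variable (x y z x' y' z' : ℝ)

@[simp] lemma vec3_apply_zero : vec3 x y z 0 = x := rfl

@[simp] lemma vec3_apply_one : vec3 x y z 1 = y := rfl

@[simp] lemma vec3_apply_two : vec3 x y z 2 = z := rfl

lemma vec3_sub : vec3 x y z - vec3 x' y' z' = vec3 (x - x') (y - y') (z - z') := by
  ext i; fin_cases i <;> rfl

lemma inner_vec3 : ⟪vec3 x y z, vec3 x' y' z'⟫ = x * x' + y * y' + z * z' := by
  simp only [PiLp.inner_apply, Fin.sum_univ_three, vec3_apply_zero, vec3_apply_one,
    vec3_apply_two, RCLike.inner_apply, conj_trivial]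
  ring

lemma norm_vec3_sq : ‖vec3 x y z‖ ^ 2 = x ^ 2 + y ^ 2 + z ^ 2 := by
  rw [← real_inner_self_eq_norm_sq, inner_vec3]
  ring

lemma cross3_vec3 :
    cross3 (vec3 x y z) (vec3 x' y' z') =
      vec3 (y * z' - z * y') (z * x' - x * z') (x * y' - y * x') := rfl

end vec3

lemma norm_cross3_sq (v w : EuclideanSpace ℝ (Fin 3)) :
    ‖cross3 v w‖ ^ 2 = ‖v‖ ^ 2 * ‖w‖ ^ 2 - ⟪v, w⟫ ^ 2 := by
  rw [cross3, norm_vec3_sq]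
  simp only [← real_inner_self_eq_norm_sq, PiLp.inner_apply, Fin.sum_univ_three,
    RCLike.inner_apply, conj_trivial]
  ring

lemma norm_vec3_spherical (θ φ : ℝ) : ‖vec3 (sin θ * cos φ) (sin θ * sin φ) (cos θ)‖ = 1 := by
  rw [← pow_eq_one_iff_of_nonneg (norm_nonneg _) two_ne_zero, norm_vec3_sq]
  linear_combination sin θ ^ 2 * sin_sq_add_cos_sq φ + sin_sq_add_cos_sq θ

theorem rcs_plate_xy_plane_general (θ_t φ_t ψ θ_r φ_r lam L1 L2 k : ℝ)
    (a_t a_r a_H e_x e_y e_z : EuclideanSpace ℝ (Fin 3))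
    (h_at : a_t = vec3 (-(sin θ_t * cos φ_t)) (-(sin θ_t * sin φ_t)) (-cos θ_t))
    (h_ar : a_r = vec3 (sin θ_r * cos φ_r) (sin θ_r * sin φ_r) (cos θ_r))
    (h_aH : a_H = vec3 (-(sin ψ * cos θ_t * cos φ_t) - cos ψ * sin φ_t)
        (-(sin ψ * cos θ_t * sin φ_t) + cos ψ * cos φ_t) (sin ψ * sin θ_t))
    (h_ex : e_x = vec3 1 0 0) (h_ey : e_y = vec3 0 1 0) (h_ez : e_z = vec3 0 0 1) :
    4 * π * L1 ^ 2 * L2 ^ 2 / lam ^ 2 * ‖cross3 (cross3 e_z a_H) a_r‖ ^ 2 *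
        _root_.sinc (k * L1 / 2 * ⟪a_r - a_t, e_x⟫) ^ 2 *
        _root_.sinc (k * L2 / 2 * ⟪a_r - a_t, e_y⟫) ^ 2
      = 4 * π * L1 ^ 2 * L2 ^ 2 / lam ^ 2 *
        (cos θ_r ^ 2 *
            (sin ψ * cos θ_t * sin (φ_r - φ_t) + cos ψ * cos (φ_t - φ_r)) ^ 2 +
          (cos ψ * sin (φ_t - φ_r) + sin ψ * cos θ_t * cos (φ_t - φ_r)) ^ 2) *
        _root_.sinc (k * L1 / 2 * (sin θ_r * cos φ_r + sin θ_t * cos φ_t)) ^ 2 *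
        _root_.sinc (k * L2 / 2 * (sin θ_r * sin φ_r + sin θ_t * sin φ_t)) ^ 2 := by
  set A := sin ψ * cos θ_t * sin (φ_r - φ_t) + cos ψ * cos (φ_t - φ_r)
  set B := cos ψ * sin (φ_t - φ_r) + sin ψ * cos θ_t * cos (φ_t - φ_r)
  have h_horiz : ‖cross3 e_z a_H‖ ^ 2 = A ^ 2 + B ^ 2 := by
    rw [h_ez, h_aH, cross3_vec3, norm_vec3_sq]
    simp only [A, B, sin_sub, cos_sub]
    linear_combination (-(sin ψ * cos θ_t) ^ 2 - cos ψ ^ 2) * (sin φ_t ^ 2 + cos φ_t ^ 2) *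
      sin_sq_add_cos_sq φ_r
  have h_proj : ⟪cross3 e_z a_H, a_r⟫ = -(sin θ_r * A) := by
    rw [h_ez, h_aH, h_ar, cross3_vec3, inner_vec3]
    simp only [A, sin_sub, cos_sub]
    ring
  have h_norm : ‖cross3 (cross3 e_z a_H) a_r‖ ^ 2 = cos θ_r ^ 2 * A ^ 2 + B ^ 2 := by
    rw [norm_cross3_sq, h_horiz, h_proj, h_ar, norm_vec3_spherical]
    linear_combination (-A ^ 2) * sin_sq_add_cos_sq θ_r
  have h_ex_proj : ⟪a_r - a_t, e_x⟫ = sin θ_r * cos φ_r + sin θ_t * cos φ_t := by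
    rw [h_ar, h_at, h_ex, vec3_sub, inner_vec3]; ring
  have h_ey_proj : ⟪a_r - a_t, e_y⟫ = sin θ_r * sin φ_r + sin θ_t * sin φ_t := by
    rw [h_ar, h_at, h_ey, vec3_sub, inner_vec3]; ring
  rw [h_norm, h_ex_proj, h_ey_proj]

/-- Lemma 2: the general RCS formula specialized to a plate in the x–y plane
(`n = e_z`, `l1 = e_x`, `l2 = e_y`) expressed via the incidence angles `θ_t, φ_t`,
the observation angles `θ_r, φ_r` and the polarization angle `ψ`. -/
theorem rcs_plate_xy_plane (θ_t φ_t ψ θ_r φ_r lam L1 L2 k : ℝ)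
    (hlam : 0 < lam) (hL1 : 0 < L1) (hL2 : 0 < L2) (hk : k = 2 * π / lam)
    (a_t a_r a_H e_x e_y e_z : EuclideanSpace ℝ (Fin 3))
    (h_at : a_t = vec3 (-(sin θ_t * cos φ_t)) (-(sin θ_t * sin φ_t)) (-cos θ_t))
    (h_ar : a_r = vec3 (sin θ_r * cos φ_r) (sin θ_r * sin φ_r) (cos θ_r))
    (h_aH : a_H = vec3 (-(sin ψ * cos θ_t * cos φ_t) - cos ψ * sin φ_t)
        (-(sin ψ * cos θ_t * sin φ_t) + cos ψ * cos φ_t) (sin ψ * sin θ_t))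
    (h_ex : e_x = vec3 1 0 0) (h_ey : e_y = vec3 0 1 0) (h_ez : e_z = vec3 0 0 1) :
    4 * π * L1 ^ 2 * L2 ^ 2 / lam ^ 2 * ‖cross3 (cross3 e_z a_H) a_r‖ ^ 2 *
        _root_.sinc (k * L1 / 2 * ⟪a_r - a_t, e_x⟫) ^ 2 *
        _root_.sinc (k * L2 / 2 * ⟪a_r - a_t, e_y⟫) ^ 2
      = 4 * π * L1 ^ 2 * L2 ^ 2 / lam ^ 2 *
        (cos θ_r ^ 2 *
            (sin ψ * cos θ_t * sin (φ_r - φ_t) + cos ψ * cos (φ_t - φ_r)) ^ 2 +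
          (cos ψ * sin (φ_t - φ_r) + sin ψ * cos θ_t * cos (φ_t - φ_r)) ^ 2) *
        _root_.sinc (k * L1 / 2 * (sin θ_r * cos φ_r + sin θ_t * cos φ_t)) ^ 2 *
        _root_.sinc (k * L2 / 2 * (sin θ_r * sin φ_r + sin θ_t * sin φ_t)) ^ 2 :=
  rcs_plate_xy_plane_general θ_t φ_t ψ θ_r φ_r lam L1 L2 k a_t a_r a_H e_x e_y e_z h_at h_ar h_aH
    h_ex h_ey h_ez
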